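/- Let 𝕏 be a semi-abelian category and let (𝒮, 𝒢) ≤ (𝒯, ℱ) be torsion theories in 𝕏 (i.e. 𝒮 ⊆ 𝒯); write t_Y : T(Y) → Y for the coreflection counit of 𝒯 and g_X : X → G(X) for the reflection unit of 𝒢. Let α : X → Y be a morphism with X in 𝒯 and Y in 𝒢, with (normal epi, mono)-factorization α = m ∘ e through an object I. Then α factors through g_X (say α = α' ∘ g_X) and through t_Y (say α = t_Y ∘ α''), the image I belongs to 𝒵 = 𝒯 ∩ 𝒢, and there exist unique morphisms β : G(X) → I and γ : I → T(Y) such that β ∘ g_X = e, m ∘ β = α', γ ∘ e = α'', and t_Y ∘ γ = m. -/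

import Mathlib

/-! Torsion classes are closed under quotients and torsion-free classes under subobjects (a
quotient of a torsion object has zero torsion-free part, and dually), so the image `I` of `α`
lies in `𝒯 ∩ 𝒢`. Since `𝒮 ⊥ 𝒢`, both `α` and `e` vanish on the `𝒮`-torsion part of `X` and so
factor uniquely through its cokernel `g_X`; dually, since `𝒯 ⊥ ℱ`, `α` and `m` factor uniquely
through the kernel `t_Y`. The remaining equations hold because `g_X` is epi and `t_Y` is mono. -/

open CategoryTheory CategoryTheory.Limits

universe v u

variable {C : Type u} [Category.{v} C]

/-- A pair of composable morphisms is a short exact sequence if the composite is zero,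
the first morphism is a kernel of the second and the second is a cokernel of the first. -/
def IsShortExact [HasZeroMorphisms C] {A X B : C} (i : A ⟶ X) (p : X ⟶ B) : Prop :=
  ∃ w : i ≫ p = 0,
    Nonempty (IsLimit (KernelFork.ofι i w)) ∧ Nonempty (IsColimit (CokernelCofork.ofπ p w))

/-- A torsion theory: a pair of full replete subcategories (given as predicates on objects)
such that every morphism from a torsion object to a torsion-free object is zero, and every
object fits in a short exact sequence with torsion kernel part and torsion-free cokernel part. -/
structure IsTorsionTheory [HasZeroMorphisms C] (T F : C → Prop) : Prop where
  t_replete : ∀ {X Y : C}, (X ≅ Y) → T X → T Y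
  f_replete : ∀ {X Y : C}, (X ≅ Y) → F X → F Y
  hom_zero : ∀ {X Y : C} (f : X ⟶ Y), T X → F Y → f = 0
  exists_seq : ∀ X : C, ∃ (TX FX : C) (i : TX ⟶ X) (p : X ⟶ FX),
    T TX ∧ F FX ∧ IsShortExact i p

/-- A torsion theory relative to a class `E` of objects: TT1 holds for all objects, while the
short exact sequence is only required for objects of `E`. -/
structure IsRelTorsionTheory [HasZeroMorphisms C] (E T F : C → Prop) : Prop where
  hom_zero : ∀ {X Y : C} (f : X ⟶ Y), T X → F Y → f = 0
  exists_seq : ∀ X : C, E X → ∃ (TX FX : C) (i : TX ⟶ X) (p : X ⟶ FX),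
    T TX ∧ F FX ∧ IsShortExact i p

/-- A TTF (torsion torsion-free) theory: a triple of full subcategories whose two consecutive
pairs are torsion theories. -/
def IsTTF [HasZeroMorphisms C] (Cc T F : C → Prop) : Prop :=
  IsTorsionTheory Cc T ∧ IsTorsionTheory T F

/-- A semi-abelian category: pointed (zero object and zero morphisms), with binary coproducts,
Barr-exact (regular: finite limits, coequalizers of kernel pairs, pullback-stable regular
epimorphisms; and every internal equivalence relation is a kernel pair) and Bourn protomodular
(the split short five lemma holds). -/
structure IsSemiAbelian (C : Type u) [Category.{v} C] [HasZeroMorphisms C] : Prop where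
  hasZeroObject : HasZeroObject C
  hasBinaryCoproducts : HasBinaryCoproducts C
  hasFiniteLimits : HasFiniteLimits C
  hasCoequalizersOfKernelPairs :
    ∀ {X Y R : C} (f : X ⟶ Y) (p₁ p₂ : R ⟶ X) (w : p₁ ≫ f = p₂ ≫ f),
      Nonempty (IsLimit (PullbackCone.mk p₁ p₂ w)) → HasCoequalizer p₁ p₂
  regularEpiStable :
    ∀ {X Y Z P : C} (f : X ⟶ Y) (g : Z ⟶ Y) (p₁ : P ⟶ X) (p₂ : P ⟶ Z) (w : p₁ ≫ f = p₂ ≫ g),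
      Nonempty (IsLimit (PullbackCone.mk p₁ p₂ w)) → Nonempty (RegularEpi f) →
        Nonempty (RegularEpi p₂)
  equivalenceRelationsEffective :
    ∀ {R X : C} (p₁ p₂ : R ⟶ X),
      (∀ {W : C} (a b : W ⟶ R), a ≫ p₁ = b ≫ p₁ → a ≫ p₂ = b ≫ p₂ → a = b) →
      (∃ r : X ⟶ R, r ≫ p₁ = 𝟙 X ∧ r ≫ p₂ = 𝟙 X) →
      (∃ s : R ⟶ R, s ≫ p₁ = p₂ ∧ s ≫ p₂ = p₁) →
      (∀ {P : C} (q₁ q₂ : P ⟶ R) (w : q₁ ≫ p₂ = q₂ ≫ p₁),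
        Nonempty (IsLimit (PullbackCone.mk q₁ q₂ w)) →
          ∃ t : P ⟶ R, t ≫ p₁ = q₁ ≫ p₁ ∧ t ≫ p₂ = q₂ ≫ p₂) →
      ∃ (Y : C) (q : X ⟶ Y) (w : p₁ ≫ q = p₂ ≫ q),
        Nonempty (IsLimit (PullbackCone.mk p₁ p₂ w))
  splitShortFiveLemma :
    ∀ {K X Y K' X' Y' : C} (k : K ⟶ X) (f : X ⟶ Y) (s : Y ⟶ X)
      (k' : K' ⟶ X') (f' : X' ⟶ Y') (s' : Y' ⟶ X')
      (α : K ⟶ K') (β : X ⟶ X') (γ : Y ⟶ Y'),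
      s ≫ f = 𝟙 Y → s' ≫ f' = 𝟙 Y' →
      IsShortExact k f → IsShortExact k' f' →
      k ≫ β = α ≫ k' → f ≫ γ = β ≫ f' →
      IsIso α → IsIso γ → IsIso β

/-- Zero morphisms on a full subcategory, induced by those of the ambient category. -/
instance (Z : C → Prop) [HasZeroMorphisms C] : HasZeroMorphisms (ObjectProperty.FullSubcategory Z) where
  zero X Y := ⟨ObjectProperty.homMk (0 : X.obj ⟶ Y.obj)⟩
  comp_zero {_X _Y} f Z' :=
    ObjectProperty.hom_ext Z (Limits.comp_zero (C := C) (f := f.hom) (Z := Z'.obj))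
  zero_comp X {_Y _Z'} f :=
    ObjectProperty.hom_ext Z (Limits.zero_comp (C := C) (X := X.obj) (f := f.hom))

namespace IsShortExact

variable [HasZeroMorphisms C] {A X B : C} {i : A ⟶ X} {p : X ⟶ B}

lemma mono_left (h : IsShortExact i p) : Mono i := by
  obtain ⟨_, ⟨hi⟩, _⟩ := h
  exact ⟨fun _ _ => Fork.IsLimit.hom_ext hi⟩

lemma epi_right (h : IsShortExact i p) : Epi p := by
  obtain ⟨_, _, ⟨hp⟩⟩ := h
  exact ⟨fun _ _ => Cofork.IsColimit.hom_ext hp⟩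

lemma existsUnique_lift (h : IsShortExact i p) {Z : C} (k : Z ⟶ X) (hk : k ≫ p = 0) :
    ∃! k' : Z ⟶ A, k' ≫ i = k := by
  obtain ⟨_, ⟨hi⟩, _⟩ := h
  obtain ⟨k', hk'⟩ := KernelFork.IsLimit.lift' hi k hk
  exact ⟨k', hk', fun l hl => Fork.IsLimit.hom_ext hi (hl.trans hk'.symm)⟩

lemma existsUnique_desc (h : IsShortExact i p) {Z : C} (k : X ⟶ Z) (hk : i ≫ k = 0) :
    ∃! k' : B ⟶ Z, p ≫ k' = k := by
  obtain ⟨_, _, ⟨hp⟩⟩ := h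
  obtain ⟨k', hk'⟩ := CokernelCofork.IsColimit.desc' hp k hk
  exact ⟨k', hk', fun l hl => Cofork.IsColimit.hom_ext hp (hl.trans hk'.symm)⟩

lemma isIso_left_of_right_eq_zero (h : IsShortExact i p) (hp : p = 0) : IsIso i := by
  obtain ⟨_, ⟨hi⟩, _⟩ := h
  exact KernelFork.IsLimit.isIso_ι _ hi hp

lemma isIso_right_of_left_eq_zero (h : IsShortExact i p) (hi : i = 0) : IsIso p := by
  obtain ⟨_, _, ⟨hp⟩⟩ := h
  exact CokernelCofork.IsColimit.isIso_π _ hp hi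

end IsShortExact

namespace IsTorsionTheory

variable [HasZeroMorphisms C] {T F : C → Prop}

lemma torsion_of_epi (h : IsTorsionTheory T F) {X I : C} (e : X ⟶ I) [Epi e] (hX : T X) :
    T I := by
  obtain ⟨TI, FI, i, p, hTI, hFI, hses⟩ := h.exists_seq I
  have hp : p = 0 := (cancel_epi e).1 (by rw [h.hom_zero (e ≫ p) hX hFI, comp_zero])
  have := hses.isIso_left_of_right_eq_zero hp
  exact h.t_replete (asIso i) hTI

lemma torsionFree_of_mono (h : IsTorsionTheory T F) {I Y : C} (m : I ⟶ Y) [Mono m] (hY : F Y) :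
    F I := by
  obtain ⟨TI, FI, i, p, hTI, hFI, hses⟩ := h.exists_seq I
  have hi : i = 0 := (cancel_mono m).1 (by rw [h.hom_zero (i ≫ m) hTI hY, zero_comp])
  have := hses.isIso_right_of_left_eq_zero hi
  exact h.f_replete (asIso p).symm hFI

end IsTorsionTheory

theorem torsion_torsionFree_image_factorizations_general [HasZeroMorphisms C]
    {S G T F : C → Prop}
    (hSG : IsTorsionTheory S G) (hTF : IsTorsionTheory T F)
    {X Y I : C} (hX : T X) (hY : G Y) (α : X ⟶ Y)
    (e : X ⟶ I) (m : I ⟶ Y) (hfac : e ≫ m = α)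
    (he : Nonempty (NormalEpi e)) (hm : Mono m)
    {SX GX : C} (s : SX ⟶ X) (g : X ⟶ GX) (hS : S SX)
    (hses : IsShortExact s g)
    {TY FY : C} (t : TY ⟶ Y) (f : Y ⟶ FY) (hF : F FY)
    (hses' : IsShortExact t f) :
    (∃ α' : GX ⟶ Y, g ≫ α' = α) ∧
    (∃ α'' : X ⟶ TY, α'' ≫ t = α) ∧
    (T I ∧ G I) ∧
    (∀ α' : GX ⟶ Y, g ≫ α' = α → ∃! β : GX ⟶ I, g ≫ β = e ∧ β ≫ m = α') ∧
    (∀ α'' : X ⟶ TY, α'' ≫ t = α → ∃! γ : I ⟶ TY, e ≫ γ = α'' ∧ γ ≫ t = m) := by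
  obtain ⟨_⟩ := he
  have := hses.epi_right
  have := hses'.mono_left
  have hTI : T I := hTF.torsion_of_epi e hX
  have hGI : G I := hSG.torsionFree_of_mono m hY
  refine ⟨(hses.existsUnique_desc α (hSG.hom_zero _ hS hY)).exists,
    (hses'.existsUnique_lift α (hTF.hom_zero _ hX hF)).exists, ⟨hTI, hGI⟩, ?_, ?_⟩
  · intro α' hα'
    obtain ⟨β, hβ, hβ_unique⟩ := hses.existsUnique_desc e (hSG.hom_zero _ hS hGI)
    refine ⟨β, ⟨hβ, (cancel_epi g).1 ?_⟩, fun β' hβ' => hβ_unique β' hβ'.1⟩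
    rw [← Category.assoc, hβ, hfac, hα']
  · intro α'' hα''
    obtain ⟨γ, hγ, hγ_unique⟩ := hses'.existsUnique_lift m (hTF.hom_zero _ hTI hF)
    refine ⟨γ, ⟨(cancel_mono t).1 ?_, hγ⟩, fun γ' hγ' => hγ_unique γ' hγ'.2⟩
    rw [Category.assoc, hγ, hfac, hα'']

/-- Let `𝕏` be semi-abelian with torsion theories `(𝒮, 𝒢) ≤ (𝒯, ℱ)`,
and let `α : X → Y` with `X ∈ 𝒯`, `Y ∈ 𝒢`, with (normal epi, mono)-factorization
`α = m ∘ e` through `I`.  Then `α` factors through the reflection unit `g_X : X → G(X)`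
and through the coreflection counit `t_Y : T(Y) → Y`, the image `I` lies in
`𝒵 = 𝒯 ∩ 𝒢`, and for any such factorizations `α = α' ∘ g_X` and `α = t_Y ∘ α''` there
are unique `β : G(X) → I` and `γ : I → T(Y)` with `β ∘ g_X = e`, `m ∘ β = α'`,
`γ ∘ e = α''` and `t_Y ∘ γ = m`. -/
theorem torsion_torsionFree_image_factorizations [HasZeroMorphisms C]
    (hC : IsSemiAbelian C) {S G T F : C → Prop}
    (hSG : IsTorsionTheory S G) (hTF : IsTorsionTheory T F)
    (hle : ∀ X : C, S X → T X)
    {X Y I : C} (hX : T X) (hY : G Y) (α : X ⟶ Y)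
    (e : X ⟶ I) (m : I ⟶ Y) (hfac : e ≫ m = α)
    (he : Nonempty (NormalEpi e)) (hm : Mono m)
    {SX GX : C} (s : SX ⟶ X) (g : X ⟶ GX) (hS : S SX) (hG : G GX)
    (hses : IsShortExact s g)
    {TY FY : C} (t : TY ⟶ Y) (f : Y ⟶ FY) (hT : T TY) (hF : F FY)
    (hses' : IsShortExact t f) :
    (∃ α' : GX ⟶ Y, g ≫ α' = α) ∧
    (∃ α'' : X ⟶ TY, α'' ≫ t = α) ∧
    (T I ∧ G I) ∧
    (∀ α' : GX ⟶ Y, g ≫ α' = α → ∃! β : GX ⟶ I, g ≫ β = e ∧ β ≫ m = α') ∧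
    (∀ α'' : X ⟶ TY, α'' ≫ t = α → ∃! γ : I ⟶ TY, e ≫ γ = α'' ∧ γ ≫ t = m) :=
  torsion_torsionFree_image_factorizations_general hSG hTF hX hY α e m hfac he hm s g hS hses t f hF
    hses'
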